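/- arXiv:2605.31373 — 2 statements merged into one kernel-verified Lean document; each statement's English description precedes it below -/
import Mathlib

section
/- A simple graph on n vertices contains at most 3^{n/3} maximal cliques; equivalently, if m denotes the number of maximal cliques of a finite simple graph G on n vertices, then m^3 ≤ 3^n. -/
/-!
Write `M(s)` for the number of maximal cliques of `G[s]` and let `v ∈ s` have the largest number
`d` of neighbours in `s`. Every maximal clique of `G[s]` contains one of the `#s - d` vertices
of `s` not adjacent to `v` (`v` itself included), since otherwise `v` could be added to it.
Deleting `u` maps the maximal cliques through `u` injectively to maximal cliques of
`G[s ∩ N(u)]`, so by induction there are at most `3 ^ (d / 3)` of them. Hence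
`M(s)³ ≤ (#s - d)³ · 3 ^ d ≤ 3 ^ (#s - d) · 3 ^ d`, using `k³ ≤ 3 ^ k`.
-/

open Finset

theorem Nat.cube_le_three_pow (k : ℕ) : k ^ 3 ≤ 3 ^ k := by
  induction k with
  | zero => norm_num
  | succ k ih =>
    rcases Nat.lt_or_ge k 3 with hk | hk
    · interval_cases k <;> norm_num
    · calc (k + 1) ^ 3 ≤ 3 * k ^ 3 := by nlinarith [Nat.mul_le_mul hk hk]
        _ ≤ 3 * 3 ^ k := Nat.mul_le_mul_left 3 ih
        _ = 3 ^ (k + 1) := Nat.pow_succ'.symm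

namespace SimpleGraph

variable {V : Type*} (G : SimpleGraph V)

noncomputable def maximalCliquesIn (s : Finset V) : Finset (Finset V) := by
  classical exact s.powerset.filter (Maximal fun t : Finset V => G.IsClique (t : Set V) ∧ t ⊆ s)

variable {G} {s C : Finset V} {u v : V}

theorem mem_maximalCliquesIn :
    C ∈ G.maximalCliquesIn s ↔
      Maximal (fun t : Finset V => G.IsClique (t : Set V) ∧ t ⊆ s) C := by
  unfold maximalCliquesIn
  simp only [mem_filter, mem_powerset, and_iff_right_iff_imp]
  exact fun h => h.prop.2

theorem maximalCliquesIn_empty : G.maximalCliquesIn ∅ = {∅} := by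
  ext C
  simp only [mem_maximalCliquesIn, subset_empty, mem_singleton]
  refine ⟨fun h => h.prop.2, ?_⟩
  rintro rfl
  exact ⟨⟨by simp, rfl⟩, fun t ht _ => ht.2.le⟩

theorem coe_maximalCliquesIn_univ [Fintype V] :
    (G.maximalCliquesIn univ : Set (Finset V)) =
      {s : Finset V | G.IsClique (s : Set V) ∧
        ∀ t : Finset V, G.IsClique (t : Set V) → s ⊆ t → t = s} := by
  ext C
  simp only [mem_coe, mem_maximalCliquesIn, subset_univ, and_true, Set.mem_ofPred_eq]
  exact ⟨fun h => ⟨h.prop, fun t ht hCt => (h.le_of_ge ht hCt).antisymm hCt⟩,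
    fun h => ⟨h.1, fun t ht hCt => (h.2 t ht hCt).le⟩⟩

theorem exists_mem_not_adj_of_mem_maximalCliquesIn (hC : C ∈ G.maximalCliquesIn s)
    (hv : v ∈ s) :
    ∃ u ∈ C, ¬ G.Adj v u := by
  classical
  rw [mem_maximalCliquesIn] at hC
  by_contra! hadj
  have hins : G.IsClique (insert v C : Finset V) ∧ insert v C ⊆ s := by
    refine ⟨?_, insert_subset hv hC.prop.2⟩
    rw [coe_insert]
    exact hC.prop.1.insert fun x hx _ => hadj x hx
  have hvC : v ∈ C := hC.le_of_ge hins (subset_insert v C) (mem_insert_self v C)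
  exact G.loopless.irrefl v (hadj v hvC)

variable [DecidableEq V] [DecidableRel G.Adj]

theorem erase_mem_maximalCliquesIn_neighbors (hC : C ∈ G.maximalCliquesIn s) (hu : u ∈ C) :
    C.erase u ∈ G.maximalCliquesIn {x ∈ s | G.Adj u x} := by
  rw [mem_maximalCliquesIn] at hC ⊢
  obtain ⟨⟨hclique, hCs⟩, hmax⟩ := hC
  refine ⟨⟨hclique.subset (by simp), fun x hx => ?_⟩, fun t ⟨ht, hts⟩ hCt => ?_⟩
  · obtain ⟨hxu, hxC⟩ := mem_erase.mp hx
    exact mem_filter.mpr ⟨hCs hxC, hclique hu hxC hxu.symm⟩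
  have huts : insert u t ⊆ s := insert_subset (hCs hu) fun x hx => (mem_filter.mp (hts hx)).1
  have hut : G.IsClique (insert u t : Finset V) := by
    rw [coe_insert]
    exact ht.insert fun x hx _ => (mem_filter.mp (hts hx)).2
  have hCut : C ⊆ insert u t := fun x hx => by
    rw [← insert_erase hu] at hx
    exact insert_subset_insert u hCt hx
  intro x hx
  have hxu : x ≠ u := fun h => G.loopless.irrefl u (h ▸ (mem_filter.mp (hts hx)).2)
  exact mem_erase.mpr ⟨hxu, hmax ⟨hut, huts⟩ hCut (mem_insert_of_mem hx)⟩

theorem card_filter_mem_maximalCliquesIn_le :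
    #{C ∈ G.maximalCliquesIn s | u ∈ C} ≤ #(G.maximalCliquesIn {x ∈ s | G.Adj u x}) := by
  refine card_le_card_of_injOn (fun C => C.erase u) (fun C hC => ?_) fun C hC D hD hCD => ?_
  · obtain ⟨hC, hu⟩ := mem_filter.mp hC
    exact erase_mem_maximalCliquesIn_neighbors hC hu
  · rw [← insert_erase (mem_filter.mp hC).2, ← insert_erase (mem_filter.mp hD).2]
    exact congrArg (insert u) hCD

theorem card_maximalCliquesIn_le_sum (hv : v ∈ s) :
    #(G.maximalCliquesIn s) ≤
      ∑ u ∈ s with ¬ G.Adj v u, #(G.maximalCliquesIn {x ∈ s | G.Adj u x}) := by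
  have hcover : G.maximalCliquesIn s ⊆
      {u ∈ s | ¬ G.Adj v u}.biUnion fun u => {C ∈ G.maximalCliquesIn s | u ∈ C} := by
    intro C hC
    obtain ⟨u, huC, hvu⟩ := exists_mem_not_adj_of_mem_maximalCliquesIn hC hv
    have hus : u ∈ s := (mem_maximalCliquesIn.mp hC).prop.2 huC
    exact mem_biUnion.mpr ⟨u, mem_filter.mpr ⟨hus, hvu⟩, mem_filter.mpr ⟨hC, huC⟩⟩
  calc #(G.maximalCliquesIn s) ≤ _ := card_le_card hcover
    _ ≤ _ := card_biUnion_le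
    _ ≤ _ := sum_le_sum fun u _ => card_filter_mem_maximalCliquesIn_le

theorem card_maximalCliquesIn_pow_three_le (s : Finset V) :
    #(G.maximalCliquesIn s) ^ 3 ≤ 3 ^ #s := by
  induction s using Finset.strongInduction with
  | H s ih =>
  rcases s.eq_empty_or_nonempty with rfl | hs
  · simp [maximalCliquesIn_empty]
  obtain ⟨v, hv, hvmax⟩ := exists_max_image s (fun w => #{x ∈ s | G.Adj w x}) hs
  set U := {u ∈ s | ¬ G.Adj v u}
  set d := #{x ∈ s | G.Adj v x}
  have hneighbors (u) (hu : u ∈ U) :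
      #(G.maximalCliquesIn {x ∈ s | G.Adj u x}) ^ 3 ≤ 3 ^ d := by
    have hus := (mem_filter.mp hu).1
    refine (ih _ (filter_ssubset.mpr ⟨u, hus, G.loopless.irrefl u⟩)).trans ?_
    exact Nat.pow_le_pow_right (by norm_num) (hvmax u hus)
  calc #(G.maximalCliquesIn s) ^ 3
      ≤ (∑ u ∈ U, #(G.maximalCliquesIn {x ∈ s | G.Adj u x})) ^ 3 :=
        Nat.pow_le_pow_left (card_maximalCliquesIn_le_sum hv) 3
    _ ≤ #U ^ 2 * ∑ u ∈ U, #(G.maximalCliquesIn {x ∈ s | G.Adj u x}) ^ 3 :=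
        pow_sum_le_card_mul_sum_pow (fun _ _ => Nat.zero_le _) 2
    _ ≤ #U ^ 2 * (#U * 3 ^ d) := Nat.mul_le_mul_left _ (sum_le_card_nsmul _ _ _ hneighbors)
    _ = #U ^ 3 * 3 ^ d := by ring
    _ ≤ 3 ^ #U * 3 ^ d := Nat.mul_le_mul_right _ (Nat.cube_le_three_pow _)
    _ = 3 ^ #s := by rw [← pow_add, add_comm, card_filter_add_card_filter_not]

end SimpleGraph

/-- Moon–Moser bound: a finite simple graph on `n` vertices has at most `3 ^ (n / 3)`
maximal cliques; equivalently, the cube of the number of maximal cliques is at most `3 ^ n`. -/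
theorem moon_moser_maximal_clique_bound {V : Type*} [Fintype V]
    (G : SimpleGraph V)
    (m : ℕ)
    (hm : m = {s : Finset V | G.IsClique (s : Set V) ∧
        ∀ t : Finset V, G.IsClique (t : Set V) → s ⊆ t → t = s}.ncard) :
    m ^ 3 ≤ 3 ^ Fintype.card V := by
  classical
  rw [hm, ← G.coe_maximalCliquesIn_univ, Set.ncard_coe_finset, ← card_univ]
  exact G.card_maximalCliquesIn_pow_three_le univ
end

section
/- Let G be a finite simple graph in which every edge is contained in exactly one maximal clique, let v be a vertex of G, and let c be any function from the vertices of G to a set of colors. Then the sum, over all maximal cliques σ of G containing v, of the multisets {{c(w) : w ∈ σ \ {v}}} equals the multiset {{c(w) : w ∈ N(v)}} of neighbor colors of v. -/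
/-!
The sets `σ \ {v}`, for the maximal cliques `σ ∋ v`, consist of neighbours of `v`, every
neighbour `w` lies in one of them, and in only one because the edge `vw` lies in a unique maximal
clique. So they partition `N(v)`, and a sum of multisets of pairwise disjoint finsets is the
multiset of their union.
-/

theorem Finset.sum_val_eq_disjiUnion_val {ι α : Type*} (s : Finset ι) (f : ι → Finset α)
    (h : (s : Set ι).PairwiseDisjoint f) :
    ∑ i ∈ s, (f i).val = (s.disjiUnion f h).val := by
  rw [disjiUnion_val, Multiset.bind, Finset.sum_eq_multiset_sum]
  rfl

namespace SimpleGraph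

variable {V : Type*} [DecidableEq V] (G : SimpleGraph V) (P : Finset V → Prop)

theorem pairwiseDisjoint_erase_of_existsUnique (s : Set (Finset V)) (v : V)
    (hs : ∀ σ ∈ s, P σ ∧ v ∈ σ) (hcl : ∀ σ, P σ → G.IsClique (σ : Set V))
    (hedge : ∀ u w : V, G.Adj u w → ∃! σ : Finset V, P σ ∧ u ∈ σ ∧ w ∈ σ) :
    s.PairwiseDisjoint (Finset.erase · v) := by
  intro σ hσ τ hτ hne
  refine Finset.disjoint_left.mpr fun w hwσ hwτ => hne ?_
  obtain ⟨hwv, hwσ⟩ := Finset.mem_erase.mp hwσ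
  obtain ⟨-, hwτ⟩ := Finset.mem_erase.mp hwτ
  obtain ⟨hPσ, hvσ⟩ := hs σ hσ
  obtain ⟨hPτ, hvτ⟩ := hs τ hτ
  exact (hedge v w (hcl σ hPσ hvσ hwσ hwv.symm)).unique ⟨hPσ, hvσ, hwσ⟩ ⟨hPτ, hvτ, hwτ⟩

theorem exists_mem_erase_iff_adj (hcl : ∀ σ, P σ → G.IsClique (σ : Set V))
    (hcover : ∀ u w : V, G.Adj u w → ∃ σ : Finset V, P σ ∧ u ∈ σ ∧ w ∈ σ) (v w : V) :
    (∃ σ, (P σ ∧ v ∈ σ) ∧ w ∈ σ.erase v) ↔ G.Adj v w := by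
  constructor
  · rintro ⟨σ, ⟨hPσ, hvσ⟩, hw⟩
    obtain ⟨hwv, hwσ⟩ := Finset.mem_erase.mp hw
    exact hcl σ hPσ hvσ hwσ hwv.symm
  · intro hvw
    obtain ⟨σ, hPσ, hvσ, hwσ⟩ := hcover v w hvw
    exact ⟨σ, ⟨hPσ, hvσ⟩, Finset.mem_erase.mpr ⟨hvw.ne', hwσ⟩⟩

end SimpleGraph

open scoped Classical in
/-- In a finite simple graph where every edge lies in exactly one maximal clique, for any
vertex `v` and coloring `c`, the sum over the maximal cliques `σ` containing `v` of the
color multisets `{{c w : w ∈ σ \ {v}}}` equals the multiset of neighbor colors of `v`. -/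
theorem maximalCliques_color_multiset_eq_neighbors {V α : Type*} [Fintype V]
    (G : SimpleGraph V)
    (MaxClique : Finset V → Prop)
    (hMax : ∀ σ : Finset V, MaxClique σ ↔
      G.IsClique (σ : Set V) ∧ ∀ τ : Finset V, G.IsClique (τ : Set V) → σ ⊆ τ → τ = σ)
    (hedge : ∀ u w : V, G.Adj u w →
      ∃! σ : Finset V, MaxClique σ ∧ u ∈ σ ∧ w ∈ σ)
    (v : V) (c : V → α) :
    (∑ σ ∈ Finset.univ.filter (fun σ : Finset V => MaxClique σ ∧ v ∈ σ),
        (σ.erase v).val.map c) = (G.neighborFinset v).val.map c := by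
  set S := Finset.univ.filter (fun σ : Finset V => MaxClique σ ∧ v ∈ σ)
  have hcl : ∀ σ, MaxClique σ → G.IsClique (σ : Set V) := fun σ h => ((hMax σ).mp h).1
  have hdisj : (S : Set (Finset V)).PairwiseDisjoint (Finset.erase · v) :=
    G.pairwiseDisjoint_erase_of_existsUnique MaxClique _ v (by simp [S]) hcl hedge
  have hunion : S.disjiUnion (Finset.erase · v) hdisj = G.neighborFinset v := by
    ext w
    simpa [S] using
      G.exists_mem_erase_iff_adj MaxClique hcl (fun u w h => (hedge u w h).exists) v w
  rw [← Multiset.coe_mapAddMonoidHom, ← map_sum, S.sum_val_eq_disjiUnion_val _ hdisj, hunion]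
end
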